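/- arXiv:2411.07190 — 2 statements merged into one kernel-verified Lean document; each statement's English description precedes it below -/
import Mathlib

section
/- For real numbers α > 0, β, and complex z with Im z > 0, the cotangent-type logarithmic derivative satisfies cos(αz+β)/sin(αz+β) = Σ_{n=1}^∞ (−2i) e^{2iβn} e^{2iαnz} − i, with the series converging absolutely. -/
open Complex

theorem stmt0 (α β : ℝ) (hα : 0 < α) (z : ℂ) (hz : 0 < z.im) :
    Summable (fun n : ℕ =>
      ‖(-2 * I) * Complex.exp (2 * I * (β : ℂ) * ((n : ℂ) + 1)) *
        Complex.exp (2 * I * (α : ℂ) * ((n : ℂ) + 1) * z)‖) ∧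
    Complex.cos ((α : ℂ) * z + β) / Complex.sin ((α : ℂ) * z + β) =
      (∑' n : ℕ, (-2 * I) * Complex.exp (2 * I * (β : ℂ) * ((n : ℂ) + 1)) *
        Complex.exp (2 * I * (α : ℂ) * ((n : ℂ) + 1) * z)) - I := by
  set w : ℂ := (α : ℂ) * z + β with hw
  have hwim : 0 < w.im := by
    simp only [hw, Complex.add_im, Complex.mul_im, Complex.ofReal_im, Complex.ofReal_re]
    simp
    positivity
  set q : ℂ := Complex.exp (2 * I * w) with hqdef
  have hqnorm : ‖q‖ < 1 := by
    rw [hqdef, Complex.norm_exp]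
    have hre : (2 * I * w).re = -2 * w.im := by
      simp [Complex.mul_re, Complex.mul_im]
    rw [hre]
    exact Real.exp_lt_one_iff.2 (by nlinarith)
  -- rewrite the terms as a geometric series
  have hterm : ∀ n : ℕ, (-2 * I) * Complex.exp (2 * I * (β : ℂ) * ((n : ℂ) + 1)) *
      Complex.exp (2 * I * (α : ℂ) * ((n : ℂ) + 1) * z) = (-2 * I) * q ^ (n + 1) := by
    intro n
    rw [mul_assoc, ← Complex.exp_add, hqdef]
    have : ((n : ℂ) + 1) = ((n + 1 : ℕ) : ℂ) := by push_cast; ring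
    rw [show (2 * I * (β : ℂ) * ((n : ℂ) + 1) + 2 * I * (α : ℂ) * ((n : ℂ) + 1) * z)
        = ((n : ℂ) + 1) * (2 * I * w) by rw [hw]; ring, this, Complex.exp_nat_mul]
  have hsum : Summable (fun n : ℕ => ‖(-2 * I) * q ^ (n + 1)‖) := by
    have : Summable (fun n : ℕ => (2 * ‖q‖) * ‖q‖ ^ n) :=
      (summable_geometric_of_lt_one (norm_nonneg q) hqnorm).mul_left _
    refine this.congr fun n => ?_
    rw [norm_mul, norm_pow]
    simp [pow_succ]
    ring
  have hq1 : (1 : ℂ) - q ≠ 0 := by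
    intro h
    have : q = 1 := by linear_combination -h
    rw [this] at hqnorm; simp at hqnorm
  have hs : Complex.sin w ≠ 0 := by
    intro h
    rcases Complex.sin_eq_zero_iff.1 h with ⟨k, hk⟩
    have : w.im = 0 := by
      rw [hk]
      simp
    linarith
  constructor
  · refine hsum.congr fun n => ?_
    rw [hterm n]
  · have htsum : (∑' n : ℕ, (-2 * I) * Complex.exp (2 * I * (β : ℂ) * ((n : ℂ) + 1)) *
        Complex.exp (2 * I * (α : ℂ) * ((n : ℂ) + 1) * z))
        = (-2 * I) * q * (1 - q)⁻¹ := by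
      calc (∑' n : ℕ, (-2 * I) * Complex.exp (2 * I * (β : ℂ) * ((n : ℂ) + 1)) *
            Complex.exp (2 * I * (α : ℂ) * ((n : ℂ) + 1) * z))
          = ∑' n : ℕ, ((-2 * I) * q) * q ^ n := by
            refine tsum_congr fun n => ?_
            rw [hterm n, pow_succ]
            ring
        _ = ((-2 * I) * q) * ∑' n : ℕ, q ^ n := tsum_mul_left
        _ = (-2 * I) * q * (1 - q)⁻¹ := by rw [tsum_geometric_of_norm_lt_one hqnorm]
    have he : Complex.exp (w * I) ≠ 0 := Complex.exp_ne_zero _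
    have hq2 : q = Complex.exp (w * I) ^ 2 := by
      rw [hqdef, ← Complex.exp_nat_mul]
      congr 1
      ring
    have hq1' : (1 : ℂ) - Complex.exp (w * I) ^ 2 ≠ 0 := by rwa [hq2] at hq1
    rw [htsum, div_eq_iff hs, Complex.sin, Complex.cos, neg_mul, Complex.exp_neg, hq2]
    field_simp
    ring_nf
    simp [Complex.I_sq]
end

section
/- Let μ = Σ_{λ ∈ A} a_λ δ_λ be a measure on ℝ where A ⊂ ℝ is locally finite and a_λ ∈ {1, 2, ..., K}, and suppose φ ↦ Σ_{λ ∈ A} a_λ φ(λ) extends to a tempered distribution whose Fourier transform is a measure ν with |ν|((−r, r)) = O(r). If additionally A is a finite union of arithmetic progressions L_1, ..., L_M (pairwise intersecting in at most one point) together with a symmetric difference of finite sets, and the convolution t ↦ Σ_λ a_λ φ(t − λ) is almost periodic for every φ ∈ C_c^∞, then the finitely supported discrepancy measure ν₀ = μ − Σ (multiplicity-weighted progression measures) vanishes identically. -/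
open MeasureTheory Complex

private lemma psi_add_le {ψ : ℕ → ℕ} (hψ : StrictMono ψ) (a b : ℕ) : ψ a + b ≤ ψ (a + b) := by
  induction b with
  | zero => simp
  | succ n ih =>
      have h := hψ (Nat.lt_succ_self (a + n))
      have e : ψ (a + (n + 1)) = ψ ((a + n) + 1) := by rw [Nat.add_assoc]
      have e2 : (a + n).succ = (a + n) + 1 := rfl
      rw [e2] at h
      omega

private lemma pigeon {M : ℕ} (c : Fin M → ℝ) (hc : ∀ m, 0 < c m) {δ : ℝ} (hδ : 0 < δ)
    (T : ℝ) : ∃ σ : ℝ, T ≤ σ ∧ ∀ m, ∃ n : ℤ, |σ - c m * n| < δ := by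
  classical
  set x : ℕ → (Fin M → ℝ) := fun j m => Int.fract ((j : ℝ) / c m) with hxdef
  have hx : ∀ j, x j ∈ Set.Icc (0 : Fin M → ℝ) 1 := by
    intro j
    refine ⟨fun m => Int.fract_nonneg _, fun m => (Int.fract_lt_one _).le⟩
  obtain ⟨aℓ, -, ψ, hψ, hconv⟩ := isCompact_Icc.tendsto_subseq hx
  have hsum0 : (0:ℝ) ≤ ∑ m, c m := Finset.sum_nonneg fun m _ => (hc m).le
  set Csum : ℝ := 1 + ∑ m, c m with hCs
  have hCpos : 0 < Csum := by linarith
  set η := δ / Csum with hηdef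
  have hη : 0 < η := div_pos hδ hCpos
  obtain ⟨N, hN⟩ := Metric.tendsto_atTop.mp hconv (η / 2) (by positivity)
  set K := Nat.ceil (max T 0) with hK
  have h1 : dist (x (ψ (N + K))) aℓ < η / 2 := by
    simpa using hN (N + K) (Nat.le_add_right _ _)
  have h2 : dist (x (ψ N)) aℓ < η / 2 := by simpa using hN N le_rfl
  have hdist : dist (x (ψ (N + K))) (x (ψ N)) < η := by
    calc dist (x (ψ (N + K))) (x (ψ N))
        ≤ dist (x (ψ (N + K))) aℓ + dist (x (ψ N)) aℓ := dist_triangle_right _ _ _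
      _ < η / 2 + η / 2 := add_lt_add h1 h2
      _ = η := add_halves η
  have hij : ψ N + K ≤ ψ (N + K) := psi_add_le hψ N K
  refine ⟨(ψ (N + K) : ℝ) - (ψ N : ℝ), ?_, ?_⟩
  · have hTK : T ≤ (K : ℝ) := le_trans (le_max_left _ _) (Nat.le_ceil _)
    have : ((ψ N : ℝ)) + (K : ℝ) ≤ (ψ (N + K) : ℝ) := by exact_mod_cast hij
    linarith
  · intro m
    have hcm := hc m
    refine ⟨⌊(ψ (N + K) : ℝ) / c m⌋ - ⌊(ψ N : ℝ) / c m⌋, ?_⟩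
    push_cast
    have key : (ψ (N + K) : ℝ) - (ψ N : ℝ)
        - c m * ((⌊(ψ (N + K) : ℝ) / c m⌋ : ℝ) - (⌊(ψ N : ℝ) / c m⌋ : ℝ))
        = c m * (x (ψ (N + K)) m - x (ψ N) m) := by
      simp only [hxdef, Int.fract]
      field_simp
      ring
    have hdm : |x (ψ (N + K)) m - x (ψ N) m| < η := by
      rw [← Real.dist_eq]
      exact lt_of_le_of_lt (dist_le_pi_dist _ _ m) hdist
    have hcmlt : c m < Csum := by
      have : c m ≤ ∑ m', c m' := Finset.single_le_sum (fun m' _ => (hc m').le) (Finset.mem_univ m)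
      rw [hCs]; linarith
    calc |(ψ (N + K) : ℝ) - (ψ N : ℝ) - c m * ((⌊(ψ (N + K) : ℝ) / c m⌋ : ℝ) - (⌊(ψ N : ℝ) / c m⌋ : ℝ))|
        = c m * |x (ψ (N + K)) m - x (ψ N) m| := by rw [key, abs_mul, abs_of_pos hcm]
      _ < c m * η := by exact mul_lt_mul_of_pos_left hdm hcm
      _ ≤ Csum * η := mul_le_mul_of_nonneg_right hcmlt.le hη.le
      _ = δ := by rw [hηdef]; field_simp

private lemma per_tsum (φ : ℝ → ℂ) (c d u : ℝ) (n : ℤ) :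
    (∑' j : ℤ, φ ((u + c * n) - (c * j + d))) = ∑' j : ℤ, φ (u - (c * j + d)) := by
  calc (∑' j : ℤ, φ ((u + c * n) - (c * j + d)))
      = ∑' j : ℤ, φ (u - (c * ((Equiv.subRight n) j : ℤ) + d)) := by
        refine tsum_congr fun j => ?_
        congr 1
        simp only [Equiv.subRight_apply]
        push_cast
        ring
    _ = ∑' j : ℤ, φ (u - (c * j + d)) :=
        (Equiv.subRight n).tsum_eq (fun j : ℤ => φ (u - (c * (j : ℝ) + d)))

private lemma lip_tsum {φ : ℝ → ℂ} (h1 : ContDiff ℝ (⊤ : ℕ∞) φ) (h2 : HasCompactSupport φ)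
    {c : ℝ} (hc : 0 < c) (d : ℝ) :
    ∃ C, 0 ≤ C ∧ ∀ u v : ℝ, |u - v| ≤ 1 →
      ‖(∑' n : ℤ, φ (u - (c * n + d))) - ∑' n : ℤ, φ (v - (c * n + d))‖ ≤ C * |u - v| := by
  classical
  have hd1 : Continuous (deriv φ) := h1.continuous_deriv (by simp)
  obtain ⟨L0, hL0⟩ := (h2.deriv).exists_bound_of_continuous hd1
  set Lc := max L0 0 with hLc
  have hLc0 : 0 ≤ Lc := le_max_right _ _
  have hφlip : ∀ x y : ℝ, ‖φ x - φ y‖ ≤ Lc * |x - y| := by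
    intro x y
    have := Convex.norm_image_sub_le_of_norm_deriv_le (C := Lc)
      (fun z _ => (h1.differentiable (by simp)).differentiableAt)
      (fun z _ => le_trans (hL0 z) (le_max_left _ _)) convex_univ
      (Set.mem_univ y) (Set.mem_univ x)
    simpa [Real.norm_eq_abs] using this
  obtain ⟨B0, hB0⟩ := isBounded_iff_forall_norm_le.mp h2.isBounded
  set B := max B0 0 with hB
  have hB0' : 0 ≤ B := le_max_right _ _
  have hBφ : ∀ z : ℝ, B < |z| → φ z = 0 := by
    intro z hz
    by_contra h
    have hz1 : z ∈ tsupport φ := subset_tsupport φ h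
    have := hB0 z hz1
    rw [Real.norm_eq_abs] at this
    have : |z| ≤ B := le_trans this (le_max_left _ _)
    linarith
  refine ⟨((2 * B + 2) / c + 1) * Lc, by positivity, ?_⟩
  intro u v huv
  set α := (u - d - (B + 1)) / c with hα
  set β := (u - d + (B + 1)) / c with hβ
  set s : Finset ℤ := Finset.Icc ⌈α⌉ ⌊β⌋ with hs
  have hbig : ∀ n : ℤ, n ∉ s → B + 1 < |u - (c * n + d)| := by
    intro n hn
    rw [hs, Finset.mem_Icc, not_and_or, not_le, not_le] at hn
    rcases hn with h | h
    · have h1 : (n : ℝ) < α := Int.lt_ceil.mp h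
      rw [hα, lt_div_iff₀ hc] at h1
      have : B + 1 < u - (c * n + d) := by nlinarith
      exact lt_of_lt_of_le this (le_abs_self _)
    · have h1 : β < (n : ℝ) := Int.floor_lt.mp h
      rw [hβ, div_lt_iff₀ hc] at h1
      have : B + 1 < -(u - (c * n + d)) := by nlinarith
      exact lt_of_lt_of_le this (neg_le_abs _)
  have hu0 : ∀ n ∉ s, φ (u - (c * n + d)) = 0 := fun n hn =>
    hBφ _ (lt_trans (by linarith) (hbig n hn))
  have hv0 : ∀ n ∉ s, φ (v - (c * n + d)) = 0 := by
    intro n hn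
    apply hBφ
    have h1 := hbig n hn
    have habs : |u - (c * n + d)| ≤ |v - (c * n + d)| + |u - v| := by
      rw [show u - (c * ↑n + d) = (v - (c * ↑n + d)) + (u - v) from by ring]
      exact abs_add_le _ _
    linarith
  rw [tsum_eq_sum hu0, tsum_eq_sum hv0, ← Finset.sum_sub_distrib]
  have hcard : (s.card : ℝ) ≤ (2 * B + 2) / c + 1 := by
    by_cases hle : ⌈α⌉ ≤ ⌊β⌋ + 1
    · have hcards : s.card = (⌊β⌋ + 1 - ⌈α⌉).toNat := by rw [hs, Int.card_Icc]
      have htn : ((⌊β⌋ + 1 - ⌈α⌉).toNat : ℤ) = ⌊β⌋ + 1 - ⌈α⌉ := Int.toNat_of_nonneg (by omega)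
      have h1 : ((⌊β⌋:ℝ)) ≤ β := Int.floor_le _
      have h2 : α ≤ ((⌈α⌉:ℝ)) := Int.le_ceil _
      have h3 : β - α = (2 * B + 2) / c := by rw [hα, hβ]; field_simp; ring
      have : (s.card : ℝ) = (⌊β⌋:ℝ) + 1 - (⌈α⌉:ℝ) := by
        rw [hcards]
        exact_mod_cast congrArg (fun z : ℤ => (z : ℝ)) htn
      rw [this]; linarith
    · have : s = ∅ := by rw [hs]; apply Finset.Icc_eq_empty; omega
      rw [this]
      simp only [Finset.card_empty, Nat.cast_zero]
      positivity
  calc ‖∑ n ∈ s, (φ (u - (c * n + d)) - φ (v - (c * n + d)))‖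
      ≤ ∑ n ∈ s, ‖φ (u - (c * n + d)) - φ (v - (c * n + d))‖ := norm_sum_le _ _
    _ ≤ ∑ _n ∈ s, Lc * |u - v| := by
        refine Finset.sum_le_sum fun n _ => ?_
        have := hφlip (u - (c * n + d)) (v - (c * n + d))
        simpa [show (u - (c * ↑n + d)) - (v - (c * ↑n + d)) = u - v from by ring] using this
    _ = (s.card : ℝ) * (Lc * |u - v|) := by rw [Finset.sum_const, nsmul_eq_mul]
    _ ≤ ((2 * B + 2) / c + 1) * Lc * |u - v| := by
        rw [mul_assoc]
        exact mul_le_mul_of_nonneg_right hcard (by positivity)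

private lemma core {M : ℕ} (Lf : ℝ → ℂ) (c : Fin M → ℝ) (hc : ∀ m, 0 < c m)
    (G : Fin M → ℝ → ℂ) (coef : Fin M → ℂ)
    (hper : ∀ (m : Fin M) (u : ℝ) (n : ℤ), G m (u + c m * n) = G m u)
    (Clip : Fin M → ℝ) (hClip0 : ∀ m, 0 ≤ Clip m)
    (hlip : ∀ (m : Fin M) (u v : ℝ), |u - v| ≤ 1 → ‖G m u - G m v‖ ≤ Clip m * |u - v|)
    (R : ℝ) (hR : 0 ≤ R)
    (hzero : ∀ u : ℝ, R < |u| → Lf u = ∑ m, coef m * G m u)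
    (hap : ∀ ε > 0, ∃ L > 0, ∀ x : ℝ, ∃ τ ∈ Set.Icc x (x + L), ∀ t : ℝ,
      ‖Lf (t + τ) - Lf t‖ < ε) :
    ∀ t, Lf t = ∑ m, coef m * G m t := by
  intro t₀
  set P : ℝ → ℂ := fun u => ∑ m, coef m * G m u with hP
  show Lf t₀ = P t₀
  by_cases hfar : R < |t₀|
  · exact hzero t₀ hfar
  push_neg at hfar
  have ht₀ : -R ≤ t₀ := (abs_le.mp hfar).1
  suffices h : ∀ ε > 0, ‖Lf t₀ - P t₀‖ < ε by
    have h0 : ‖Lf t₀ - P t₀‖ ≤ 0 := by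
      by_contra hpos
      push_neg at hpos
      exact absurd (h _ hpos) (lt_irrefl _)
    exact sub_eq_zero.mp (norm_le_zero_iff.mp h0)
  intro ε hε
  set ε' := ε / 4 with hε'
  have hε'pos : 0 < ε' := by positivity
  obtain ⟨L, hL, hapL⟩ := hap ε' hε'pos
  obtain ⟨τ, hτmem, hτ⟩ := hapL (2 * R + 1)
  have hτlb : 2 * R + 1 ≤ τ := hτmem.1
  have hPzero : ∀ u : ℝ, R < u → Lf u = P u := by
    intro u hu
    exact hzero u (lt_of_lt_of_le hu (le_abs_self u))
  have hQfar : ∀ u : ℝ, R < u → ‖P (u + τ) - P u‖ < ε' := by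
    intro u hu
    rw [← hPzero (u + τ) (by linarith), ← hPzero u hu]
    exact hτ u
  set Dk := ∑ m, ‖coef m‖ * Clip m with hDk
  have hDk0 : 0 ≤ Dk :=
    Finset.sum_nonneg fun m _ => mul_nonneg (norm_nonneg _) (hClip0 m)
  set δ := min 1 (ε' / (2 * Dk + 1)) with hδdef
  have hδpos : 0 < δ := lt_min one_pos (by positivity)
  have hδ1 : δ ≤ 1 := min_le_left _ _
  have hDkδ : 2 * (Dk * δ) ≤ ε' := by
    have h1 : δ ≤ ε' / (2 * Dk + 1) := min_le_right _ _
    have h2 : (2 * Dk) * δ ≤ (2 * Dk) * (ε' / (2 * Dk + 1)) :=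
      mul_le_mul_of_nonneg_left h1 (by linarith)
    have h3 : (2 * Dk) * (ε' / (2 * Dk + 1)) ≤ ε' := by
      rw [show (2 * Dk) * (ε' / (2 * Dk + 1)) = ε' * ((2 * Dk) / (2 * Dk + 1)) from by ring]
      exact mul_le_of_le_one_right hε'pos.le
        ((div_le_one (by linarith)).mpr (by linarith))
    calc 2 * (Dk * δ) = (2 * Dk) * δ := by ring
      _ ≤ (2 * Dk) * (ε' / (2 * Dk + 1)) := h2
      _ ≤ ε' := h3
  have hshift : ∀ (u σ : ℝ), (∀ m, ∃ n : ℤ, |σ - c m * n| < δ) →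
      ‖P (u + σ) - P u‖ ≤ Dk * δ := by
    intro u σ hσ
    have hPdiff : P (u + σ) - P u = ∑ m, coef m * (G m (u + σ) - G m u) := by
      simp only [hP]
      rw [← Finset.sum_sub_distrib]
      exact Finset.sum_congr rfl fun m _ => (mul_sub _ _ _).symm
    rw [hPdiff]
    calc ‖∑ m, coef m * (G m (u + σ) - G m u)‖
        ≤ ∑ m, ‖coef m * (G m (u + σ) - G m u)‖ := norm_sum_le _ _
      _ ≤ ∑ m, ‖coef m‖ * (Clip m * δ) := by
          refine Finset.sum_le_sum fun m _ => ?_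
          rw [norm_mul]
          refine mul_le_mul_of_nonneg_left ?_ (norm_nonneg _)
          obtain ⟨n, hn⟩ := hσ m
          have hGm : G m (u + σ) = G m (u + (σ - c m * n)) := by
            calc G m (u + σ) = G m ((u + (σ - c m * n)) + c m * n) := by
                  rw [show u + σ = (u + (σ - c m * n)) + c m * n from by ring]
              _ = G m (u + (σ - c m * n)) := hper m _ n
          rw [hGm]
          have hle1 : |(u + (σ - c m * n)) - u| ≤ 1 := by
            rw [add_sub_cancel_left]
            exact hn.le.trans hδ1
          calc ‖G m (u + (σ - c m * n)) - G m u‖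
              ≤ Clip m * |(u + (σ - c m * n)) - u| := hlip m _ _ hle1
            _ = Clip m * |σ - c m * n| := by rw [add_sub_cancel_left]
            _ ≤ Clip m * δ := mul_le_mul_of_nonneg_left hn.le (hClip0 m)
      _ = Dk * δ := by
          rw [hDk, Finset.sum_mul]
          exact Finset.sum_congr rfl fun m _ => by ring
  obtain ⟨σ, hσT, hσm⟩ := pigeon c hc hδpos (R + 1 - t₀)
  have hQt : ‖P (t₀ + τ) - P t₀‖ < 2 * ε' := by
    have h1 : ‖P ((t₀ + σ) + τ) - P (t₀ + σ)‖ < ε' := hQfar _ (by linarith)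
    have h2 : ‖P ((t₀ + τ) + σ) - P (t₀ + τ)‖ ≤ Dk * δ := hshift _ σ hσm
    have h3 : ‖P (t₀ + σ) - P t₀‖ ≤ Dk * δ := hshift _ σ hσm
    have harg : (t₀ + σ) + τ = (t₀ + τ) + σ := by ring
    rw [harg] at h1
    have hdecomp : ‖P (t₀ + τ) - P t₀‖
        ≤ ‖P ((t₀ + τ) + σ) - P (t₀ + τ)‖ + (‖P ((t₀ + τ) + σ) - P (t₀ + σ)‖
          + ‖P (t₀ + σ) - P t₀‖) := by
      calc ‖P (t₀ + τ) - P t₀‖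
          = ‖(-(P ((t₀ + τ) + σ) - P (t₀ + τ))) + ((P ((t₀ + τ) + σ) - P (t₀ + σ))
              + (P (t₀ + σ) - P t₀))‖ := by congr 1; ring
        _ ≤ ‖-(P ((t₀ + τ) + σ) - P (t₀ + τ))‖ + ‖(P ((t₀ + τ) + σ) - P (t₀ + σ))
              + (P (t₀ + σ) - P t₀)‖ := norm_add_le _ _
        _ ≤ ‖P ((t₀ + τ) + σ) - P (t₀ + τ)‖ + (‖P ((t₀ + τ) + σ) - P (t₀ + σ)‖
              + ‖P (t₀ + σ) - P t₀‖) := by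
            rw [norm_neg]
            exact add_le_add le_rfl (norm_add_le _ _)
    linarith
  have hfar2 : Lf (t₀ + τ) = P (t₀ + τ) := hPzero _ (by linarith)
  have hLdiff := hτ t₀
  have hsum : ‖Lf t₀ - P t₀‖ ≤ ‖Lf (t₀ + τ) - Lf t₀‖ + (‖Lf (t₀ + τ) - P (t₀ + τ)‖
      + ‖P (t₀ + τ) - P t₀‖) := by
    calc ‖Lf t₀ - P t₀‖
        = ‖(-(Lf (t₀ + τ) - Lf t₀)) + ((Lf (t₀ + τ) - P (t₀ + τ)) + (P (t₀ + τ) - P t₀))‖ := by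
          congr 1; ring
      _ ≤ ‖-(Lf (t₀ + τ) - Lf t₀)‖ + ‖(Lf (t₀ + τ) - P (t₀ + τ)) + (P (t₀ + τ) - P t₀)‖ :=
          norm_add_le _ _
      _ ≤ ‖Lf (t₀ + τ) - Lf t₀‖ + (‖Lf (t₀ + τ) - P (t₀ + τ)‖ + ‖P (t₀ + τ) - P t₀‖) := by
          rw [norm_neg]
          exact add_le_add le_rfl (norm_add_le _ _)
  have h0 : ‖Lf (t₀ + τ) - P (t₀ + τ)‖ = 0 := by rw [hfar2, sub_self, norm_zero]
  rw [hε'] at hLdiff hQt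
  linarith

/-- Meyer-type rigidity: if the weighted Dirac comb `μ = Σ_{x ∈ A} a x δ_x` has a
Fourier transform which is a measure of at most linear growth, `A` is a finite union
of arithmetic progressions (pairwise intersecting in at most one point) up to finite
sets, the discrepancy between `μ` and the weighted progression measures is finitely
supported, and all convolutions of `μ` with test functions are Bohr almost periodic,
then the discrepancy vanishes: convolutions of `μ` agree with those of the
progression measures. -/
theorem stmt19 (A : Set ℝ)
    (hA_lf : ∀ K : Set ℝ, IsCompact K → (A ∩ K).Finite)
    (K : ℕ) (a : ℝ → ℕ) (ha : ∀ x ∈ A, 1 ≤ a x ∧ a x ≤ K)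
    -- the Fourier transform of μ is the complex measure `f • ν` with linear growth
    (ν : Measure ℝ) (f : ℝ → ℂ) (hf_meas : Measurable f) (hf : ∀ x, ‖f x‖ = 1)
    (hFT : ∀ φ : SchwartzMap ℝ ℂ,
      (∑' x : A, (a x : ℂ) * FourierTransform.fourier (fun t : ℝ => φ t) x)
        = ∫ x, φ x * f x ∂ν)
    (hν : ∃ Cν r₀ : ℝ, ∀ r ≥ r₀, ν (Set.Ioo (-r) r) ≤ ENNReal.ofReal (Cν * r))
    -- A is a finite union of arithmetic progressions up to finite sets
    (M : ℕ) (c d : Fin M → ℝ) (hc : ∀ m, 0 < c m) (k : Fin M → ℕ)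
    (F₁ F₂ : Set ℝ) (hF₁ : F₁.Finite) (hF₂ : F₂.Finite)
    (hAeq : A = ((⋃ m : Fin M, {x : ℝ | ∃ n : ℤ, x = c m * n + d m}) ∪ F₁) \ F₂)
    (hpair : ∀ m m' : Fin M, m ≠ m' →
      ({x : ℝ | ∃ n : ℤ, x = c m * n + d m} ∩
        {x : ℝ | ∃ n : ℤ, x = c m' * n + d m'}).Subsingleton)
    -- the discrepancy measure ν₀ is finitely supported
    (hfin : ∃ S : Finset ℝ, ∀ φ : ℝ → ℂ, ContDiff ℝ (⊤ : ℕ∞) φ → HasCompactSupport φ →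
      (∀ x ∈ S, φ x = 0) →
      (∑' x : A, (a x : ℂ) * φ x)
        = ∑ m : Fin M, (k m : ℂ) * ∑' n : ℤ, φ (c m * n + d m))
    -- convolutions of μ with test functions are Bohr almost periodic
    (hap : ∀ φ : ℝ → ℂ, ContDiff ℝ (⊤ : ℕ∞) φ → HasCompactSupport φ →
      ∀ ε > 0, ∃ L > 0, ∀ x : ℝ, ∃ τ ∈ Set.Icc x (x + L), ∀ t : ℝ,
        ‖(∑' y : A, (a y : ℂ) * φ ((t + τ) - y)) - ∑' y : A, (a y : ℂ) * φ (t - y)‖ < ε) :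
    -- conclusion: the discrepancy ν₀ vanishes identically
    ∀ φ : ℝ → ℂ, ContDiff ℝ (⊤ : ℕ∞) φ → HasCompactSupport φ → ∀ t : ℝ,
      (∑' y : A, (a y : ℂ) * φ (t - y))
        = ∑ m : Fin M, (k m : ℂ) * ∑' n : ℤ, φ (t - (c m * n + d m)) := by
  classical
  obtain ⟨S, hS⟩ := hfin
  intro φ hφ1 hφ2
  -- bound on the support of φ
  obtain ⟨B0, hB0⟩ := isBounded_iff_forall_norm_le.mp hφ2.isBounded
  set B := max B0 0 with hB
  have hB0' : 0 ≤ B := le_max_right _ _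
  have hBφ : ∀ z : ℝ, B < |z| → φ z = 0 := by
    intro z hz
    by_contra h
    have hz1 : z ∈ tsupport φ := subset_tsupport φ h
    have h2 := hB0 z hz1
    rw [Real.norm_eq_abs] at h2
    have : |z| ≤ B := le_trans h2 (le_max_left _ _)
    linarith
  -- bound on S
  obtain ⟨BS0, hBS0⟩ := (S.image (fun s : ℝ => |s|)).exists_le
  set BS := max BS0 0 with hBS
  have hBS0' : 0 ≤ BS := le_max_right _ _
  have hBSb : ∀ s ∈ S, |s| ≤ BS := by
    intro s hs
    have : |s| ≤ BS0 := hBS0 _ (Finset.mem_image_of_mem (fun s : ℝ => |s|) hs)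
    exact this.trans (le_max_left _ _)
  -- Lipschitz constants
  have hlipm : ∀ m : Fin M, ∃ C, 0 ≤ C ∧ ∀ u v : ℝ, |u - v| ≤ 1 →
      ‖(∑' n : ℤ, φ (u - (c m * n + d m))) - ∑' n : ℤ, φ (v - (c m * n + d m))‖
        ≤ C * |u - v| := fun m => lip_tsum hφ1 hφ2 (hc m) (d m)
  choose Clip hClip0 hlip using hlipm
  have hper : ∀ (m : Fin M) (u : ℝ) (n : ℤ),
      (∑' j : ℤ, φ ((u + c m * n) - (c m * j + d m))) = ∑' j : ℤ, φ (u - (c m * j + d m)) :=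
    fun m u n => per_tsum φ (c m) (d m) u n
  have hzero : ∀ u : ℝ, B + BS < |u| →
      (∑' y : A, (a y : ℂ) * φ (u - y))
        = ∑ m : Fin M, (k m : ℂ) * ∑' n : ℤ, φ (u - (c m * n + d m)) := by
    intro u hu
    have hψc : ContDiff ℝ (⊤ : ℕ∞) (fun x : ℝ => φ (u - x)) :=
      hφ1.comp (contDiff_const.sub contDiff_id)
    have hψs : HasCompactSupport (fun x : ℝ => φ (u - x)) := by
      have := hφ2.comp_homeomorph (Homeomorph.subLeft u)
      simpa [Function.comp_def] using this
    have hvan : ∀ x ∈ S, (fun x : ℝ => φ (u - x)) x = 0 := by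
      intro s hs
      apply hBφ
      have h1 : |s| ≤ BS := hBSb s hs
      have h2 : |u| - |s| ≤ |u - s| := abs_sub_abs_le_abs_sub u s
      linarith
    have := hS (fun x => φ (u - x)) hψc hψs hvan
    simpa using this
  have hcore := core (fun u => ∑' y : A, (a y : ℂ) * φ (u - y)) c hc
    (fun m u => ∑' n : ℤ, φ (u - (c m * n + d m))) (fun m => (k m : ℂ))
    hper Clip hClip0 hlip (B + BS) (by positivity) hzero
    (fun ε hε => hap φ hφ1 hφ2 ε hε)
  exact fun t => hcore t
end
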